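/- For every r ∈ F₂ with r ≠ e there exist s, t, r' ∈ F₂ such that B(r') ⊆ B(r) and (s·B(r)) ∪ (t·B(r')) = F₂. -/

import Mathlib

open scoped Pointwise

/-- The free group on two generators. -/
abbrev F₂ := FreeGroup Bool

/-- The generator `a`. -/
def ga : F₂ := FreeGroup.of true

/-- The generator `b`. -/
def gb : F₂ := FreeGroup.of false

/-- The word length `|w|` of an element of the free group. -/
def wl (w : F₂) : ℕ := w.toWord.length

/-- The cylinder set `B(t)` of elements whose reduced word begins with the reduced word of `t`. -/
def cyl (t : F₂) : Set F₂ := {x | ∃ y : F₂, x = t * y ∧ wl x = wl t + wl y}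

namespace Stmt7Aux

open FreeGroup List

/-- The "no cancellation" relation between adjacent letters. -/
def RR (a b : Bool × Bool) : Prop := ¬(a.1 = b.1 ∧ a.2 = !b.2)

lemma reduced_cons {a : Bool × Bool} {L : List (Bool × Bool)}
    (h : reduce (a :: L) = a :: L) :
    reduce L = L ∧ ∀ b ∈ L.head?, RR a b := by
  rw [FreeGroup.reduce.cons] at h
  rcases hL : reduce L with _ | ⟨hd, tl⟩
  · rw [hL] at h
    simp only [List.casesOn] at h
    injection h with h1 h2
    subst h2
    exact ⟨rfl, by simp [RR]⟩
  · rw [hL] at h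
    simp only [List.casesOn] at h
    split_ifs at h with hcond
    · exfalso
      have hsub : (hd :: tl).Sublist L := hL ▸ (FreeGroup.Red.sublist (FreeGroup.reduce.red))
      have h1 : tl.length + 1 ≤ L.length := hsub.length_le
      have h2 : tl.length = L.length + 1 := by rw [h]; simp
      omega
    · have : L = hd :: tl := by injection h with h1 h2; exact h2.symm
      subst this
      refine ⟨rfl, ?_⟩
      intro b hb
      simp only [List.head?_cons, Option.mem_def, Option.some.injEq] at hb
      subst hb
      exact hcond

lemma reduced_iff (L : List (Bool × Bool)) : reduce L = L ↔ List.Chain' RR L := by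
  induction L with
  | nil => simp; exact List.isChain_nil
  | cons a L ih =>
    constructor
    · intro h
      obtain ⟨h1, h2⟩ := reduced_cons h
      exact List.isChain_cons.2 ⟨h2, ih.1 h1⟩
    · intro h
      obtain ⟨h1, h2⟩ := List.isChain_cons.1 h
      rw [FreeGroup.reduce.cons, ih.2 h2]
      rcases L with _ | ⟨hd, tl⟩
      · rfl
      · simp only [List.casesOn]
        rw [if_neg (h1 hd rfl)]

lemma chain'_toWord (x : F₂) : List.Chain' RR x.toWord :=
  (reduced_iff _).1 (FreeGroup.reduce_toWord x)

lemma toWord_mul_of_chain {x y : F₂} (h : List.Chain' RR (x.toWord ++ y.toWord)) :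
    (x * y).toWord = x.toWord ++ y.toWord := by
  conv_lhs => rw [← FreeGroup.mk_toWord (x := x), ← FreeGroup.mk_toWord (x := y)]
  rw [FreeGroup.mul_mk, FreeGroup.toWord_mk, (reduced_iff _).2 h]

lemma mem_cyl_iff {t x : F₂} : x ∈ cyl t ↔ t.toWord <+: x.toWord := by
  constructor
  · rintro ⟨y, rfl, hlen⟩
    have hx : t * y = FreeGroup.mk (t.toWord ++ y.toWord) := by
      rw [← FreeGroup.mul_mk, FreeGroup.mk_toWord, FreeGroup.mk_toWord]
    have hred : FreeGroup.Red (t.toWord ++ y.toWord) ((t * y).toWord) := by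
      rw [hx, FreeGroup.toWord_mk]
      exact FreeGroup.reduce.red
    have heq : (t * y).toWord = t.toWord ++ y.toWord := by
      refine (FreeGroup.Red.sublist hred).eq_of_length ?_
      simp only [List.length_append]
      simpa [wl] using hlen
    exact ⟨y.toWord, heq.symm⟩
  · rintro ⟨M, hM⟩
    have hchain : List.Chain' RR (t.toWord ++ M) := hM ▸ chain'_toWord x
    obtain ⟨-, hMc, -⟩ := List.isChain_append.1 hchain
    refine ⟨FreeGroup.mk M, ?_, ?_⟩
    · rw [← FreeGroup.mk_toWord (x := x), ← hM, ← FreeGroup.mul_mk,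
        FreeGroup.mk_toWord]
    · have hMw : (FreeGroup.mk M).toWord = M := by
        rw [FreeGroup.toWord_mk, (reduced_iff _).2 hMc]
      simp [wl, ← hM, hMw]

lemma mul_mem_cyl {w x : F₂}
    (h : ∀ p ∈ w.toWord.getLast?, ∀ q ∈ x.toWord.head?, RR p q) :
    w * x ∈ cyl w := by
  have hchain : List.Chain' RR (w.toWord ++ x.toWord) :=
    List.isChain_append.2 ⟨chain'_toWord w, chain'_toWord x, h⟩
  refine ⟨x, rfl, ?_⟩
  simp [wl, toWord_mul_of_chain hchain]

end Stmt7Aux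

open Stmt7Aux FreeGroup List in
/-- For every `r ≠ e` there are `s, t, r'` with `B(r') ⊆ B(r)` and `s·B(r) ∪ t·B(r') = F₂`. -/
theorem stmt_7 (r : F₂) (hr : r ≠ 1) :
    ∃ s t r' : F₂, cyl r' ⊆ cyl r ∧ (s • cyl r) ∪ (t • cyl r') = Set.univ := by
  have hLne : r.toWord ≠ [] := by
    simpa using hr
  obtain ⟨L', ℓ, hsplit⟩ : ∃ L' ℓ, r.toWord = L' ++ [ℓ] :=
    ⟨r.toWord.dropLast, r.toWord.getLast hLne,
      (List.dropLast_append_getLast hLne).symm⟩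
  set c : Bool × Bool := (!ℓ.1, true) with hc
  have hlast : r.toWord.getLast? = some ℓ := by rw [hsplit]; exact List.getLast?_concat
  have hchainr : List.Chain' RR r.toWord := chain'_toWord r
  have hchain' : List.Chain' RR (r.toWord ++ [c]) := by
    apply List.isChain_append.2
    refine ⟨hchainr, List.isChain_singleton _, ?_⟩
    intro p hp q hq
    rw [hlast, Option.mem_def, Option.some.injEq] at hp
    simp only [List.head?_cons, Option.mem_def, Option.some.injEq] at hq
    subst hp; subst hq
    rintro ⟨h1, -⟩
    simp [hc] at h1
  set r' : F₂ := FreeGroup.mk (r.toWord ++ [c]) with hr'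
  have hr'w : r'.toWord = r.toWord ++ [c] := by
    rw [hr', FreeGroup.toWord_mk, (reduced_iff _).2 hchain']
  have hlast' : r'.toWord.getLast? = some c := by rw [hr'w]; exact List.getLast?_concat
  refine ⟨r⁻¹, r'⁻¹, r', ?_, ?_⟩
  · intro x hx
    rw [mem_cyl_iff] at hx ⊢
    exact List.IsPrefix.trans ⟨[c], hr'w.symm⟩ hx
  · ext x
    simp only [Set.mem_union, Set.mem_univ, iff_true, Set.mem_inv_smul_set_iff,
      smul_eq_mul]
    rcases hx : x.toWord with _ | ⟨q, M⟩
    · left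
      apply mul_mem_cyl
      simp [hx]
    · have hq : x.toWord.head? = some q := by rw [hx]; rfl
      by_cases hq1 : q.1 = ℓ.1
      · right
        apply mul_mem_cyl
        intro p hp q' hq'
        rw [hlast', Option.mem_def, Option.some.injEq] at hp
        rw [hq, Option.mem_def, Option.some.injEq] at hq'
        subst hp; subst hq'
        rintro ⟨h1, -⟩
        rw [hc] at h1
        simp only at h1
        rw [← hq1] at h1
        exact Bool.not_ne_self q.1 h1
      · left
        apply mul_mem_cyl
        intro p hp q' hq'
        rw [hlast, Option.mem_def, Option.some.injEq] at hp
        rw [hq, Option.mem_def, Option.some.injEq] at hq'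
        subst hp; subst hq'
        rintro ⟨h1, -⟩
        exact hq1 h1.symm
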